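/- arXiv:0707.2985 — 7 statements merged into one kernel-verified Lean document; each statement's English description precedes it below -/
import Mathlib

section
/- For a nonincreasing sequence ξ of positive reals with ξ_1 = 1, the sequence ξ can be reconstructed from its ratio of regularity r = r(ξ) by: ξ_1 = 1 and ξ_n = (1/(n·r_n)) · ∏_{j=2}^n (1 + 1/(j·r_j − 1)) for n > 1. -/
open Finset Filter Real

/-- First-order arithmetic mean: (ξ_a)_n = (1/n) ∑_{j=1}^n ξ_j. -/
noncomputable def am (ξ : ℕ → ℝ) (n : ℕ) : ℝ := (∑ j ∈ Finset.Icc 1 n, ξ j) / n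

/-- Second-order arithmetic mean. -/
noncomputable def am2 (ξ : ℕ → ℝ) : ℕ → ℝ := am (am ξ)

/-- Harmonic numbers H_n = ∑_{j=1}^n 1/j. -/
noncomputable def harm (n : ℕ) : ℝ := ∑ j ∈ Finset.Icc 1 n, (1 : ℝ) / j

/-! The partial sums `S n = ∑_{j=1}^n ξ_j` satisfy `n r_n = S n / ξ n`, and the `j`-th factor of the
product is `1 + ξ_j / S (j-1) = S j / S (j-1)`, so the product telescopes to `S n / ξ 1`. -/

lemma one_add_one_div_add_div_sub_one {K : Type*} [Field K] {a b : K} (ha : a ≠ 0) (hb : b ≠ 0) :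
    1 + 1 / ((a + b) / b - 1) = (a + b) / a := by
  rw [add_div, div_self hb, add_sub_cancel_right, one_div_div, add_div a, div_self ha]

lemma natCast_mul_am_div (ξ : ℕ → ℝ) {n : ℕ} (hn : n ≠ 0) :
    (n : ℝ) * (am ξ n / ξ n) = (∑ j ∈ Icc 1 n, ξ j) / ξ n := by
  rw [am, div_div, ← mul_div_assoc, mul_div_mul_left _ _ (Nat.cast_ne_zero.mpr hn)]

section

variable {ξ : ℕ → ℝ}

lemma sum_Icc_one_pos (hpos : ∀ n : ℕ, 1 ≤ n → 0 < ξ n) {n : ℕ} (hn : 1 ≤ n) :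
    0 < ∑ j ∈ Icc 1 n, ξ j :=
  sum_pos (fun i hi ↦ hpos i (mem_Icc.mp hi).1) ⟨1, mem_Icc.mpr ⟨le_rfl, hn⟩⟩

lemma prod_Icc_two_one_add_one_div_mul_am_div_sub_one (hpos : ∀ n : ℕ, 1 ≤ n → 0 < ξ n)
    {n : ℕ} (hn : 1 ≤ n) :
    ∏ j ∈ Icc 2 n, (1 + 1 / ((j : ℝ) * (am ξ j / ξ j) - 1)) = (∑ j ∈ Icc 1 n, ξ j) / ξ 1 := by
  induction n, hn using Nat.le_induction with
  | base => simp [(hpos 1 le_rfl).ne']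
  | succ k hk ih =>
    have hS := (sum_Icc_one_pos hpos hk).ne'
    rw [prod_Icc_succ_top (by omega), ih, natCast_mul_am_div ξ k.succ_ne_zero,
      sum_Icc_succ_top (by omega),
      one_add_one_div_add_div_sub_one hS (hpos (k + 1) (by omega)).ne', div_mul_div_comm,
      mul_comm, mul_div_mul_right _ _ hS]

end

theorem stmt_1_general (ξ : ℕ → ℝ)
    (hpos : ∀ n : ℕ, 1 ≤ n → 0 < ξ n)
    (h1 : ξ 1 = 1) :
    ∀ n : ℕ, 1 < n →
      ξ n = (1 / ((n : ℝ) * (am ξ n / ξ n))) *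
        ∏ j ∈ Finset.Icc 2 n, (1 + 1 / ((j : ℝ) * (am ξ j / ξ j) - 1)) := by
  intro n hn
  rw [prod_Icc_two_one_add_one_div_mul_am_div_sub_one hpos hn.le, h1, div_one,
    natCast_mul_am_div ξ (by omega), one_div_div,
    div_mul_cancel₀ _ (sum_Icc_one_pos hpos hn.le).ne']

theorem stmt_1 (ξ : ℕ → ℝ)
    (hmono : ∀ n : ℕ, 1 ≤ n → ξ (n + 1) ≤ ξ n)
    (hpos : ∀ n : ℕ, 1 ≤ n → 0 < ξ n)
    (h1 : ξ 1 = 1) :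
    ∀ n : ℕ, 1 < n →
      ξ n = (1 / ((n : ℝ) * (am ξ n / ξ n))) *
        ∏ j ∈ Finset.Icc 2 n, (1 + 1 / ((j : ℝ) * (am ξ j / ξ j) - 1)) :=
  stmt_1_general ξ hpos h1
end

section
/- Let r : ℕ → ℝ satisfy r_1 = 1 and (n+1)r_{n+1} ≥ n·r_n + 1 for all n, and define ξ by ξ_1 = 1 and ξ_n = (1/(n·r_n)) ∏_{j=2}^n (1 + 1/(j·r_j − 1)) for n > 1. Then ξ is nonincreasing, and ξ_n → 0 if and only if log r_n + ∑_{j=2}^n (1/j)(1 − 1/r_j) → ∞. -/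
open Finset Filter Real

/-!
With `a_n = n r_n` the recursion reads `a_{n+1} ≥ a_n + 1`, so `a_n ≥ n`, and
`ξ_{n+1} / ξ_n = a_n / (a_{n+1} - 1) ≤ 1`.
Writing `log n` as a telescoping sum gives
`log ξ_n + log r_n + ∑_{j=2}^n (1/j)(1 - 1/r_j) = ∑_{j=2}^n (φ(a_j) - φ(j))`
with `φ(x) = -log (1 - 1/x) - 1/x ∈ [0, 1/(x(x-1))]`. As `a_j ≥ j`, each term is bounded by
`1/(j(j-1))`, so the sum is bounded by `1`. Hence `ξ_n → 0`, i.e. `log ξ_n → -∞`, exactly when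
the other sequence tends to `∞`.
-/

lemma sum_Icc_two_sub_sub_one {M : Type*} [AddCommGroup M] (f : ℝ → M) {n : ℕ} (hn : 1 ≤ n) :
    ∑ j ∈ Icc 2 n, (f j - f ((j : ℝ) - 1)) = f n - f 1 := by
  induction n, hn using Nat.le_induction with
  | base => simp
  | succ n hn ih =>
    rw [sum_Icc_succ_top (by omega), ih]
    push_cast
    simp

lemma one_div_le_log_sub_log_sub_one {x : ℝ} (hx : 1 < x) : 1 / x ≤ log x - log (x - 1) := by
  have h := one_sub_inv_le_log_of_pos (x := x / (x - 1)) (by apply div_pos <;> linarith)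
  rw [log_div (by linarith) (by linarith), inv_div] at h
  have : 1 - (x - 1) / x = 1 / x := by field_simp; ring
  linarith

lemma log_sub_log_sub_one_le {x : ℝ} (hx : 1 < x) : log x - log (x - 1) ≤ 1 / (x - 1) := by
  have h := log_le_sub_one_of_pos (x := x / (x - 1)) (by apply div_pos <;> linarith)
  rw [log_div (by linarith) (by linarith)] at h
  have : x / (x - 1) - 1 = 1 / (x - 1) := by field_simp [(by linarith : x - 1 ≠ 0)]; ring
  linarith

noncomputable def logDefect (x : ℝ) : ℝ := log x - log (x - 1) - 1 / x

lemma logDefect_nonneg {x : ℝ} (hx : 1 < x) : 0 ≤ logDefect x := by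
  have := one_div_le_log_sub_log_sub_one hx
  unfold logDefect
  linarith

lemma logDefect_le {x : ℝ} (hx : 1 < x) : logDefect x ≤ 1 / (x - 1) - 1 / x := by
  have := log_sub_log_sub_one_le hx
  unfold logDefect
  linarith

lemma one_div_sub_one_sub_one_div_le_of_le {x y : ℝ} (hx : 1 < x) (hxy : x ≤ y) :
    1 / (y - 1) - 1 / y ≤ 1 / (x - 1) - 1 / x := by
  have key : ∀ t : ℝ, 1 < t → 1 / (t - 1) - 1 / t = 1 / ((t - 1) * t) := by
    intro t ht
    field_simp [(by linarith : t - 1 ≠ 0)]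
    ring
  have : 0 < x - 1 := by linarith
  rw [key x hx, key y (by linarith)]
  gcongr
  linarith

lemma abs_logDefect_sub_le {x y : ℝ} (hx : 1 < x) (hxy : x ≤ y) :
    |logDefect y - logDefect x| ≤ 1 / (x - 1) - 1 / x :=
  abs_sub_le_of_nonneg_of_le (logDefect_nonneg (by linarith))
    ((logDefect_le (by linarith)).trans (one_div_sub_one_sub_one_div_le_of_le hx hxy))
    (logDefect_nonneg hx) (logDefect_le hx)

lemma abs_sum_logDefect_sub_le {a : ℕ → ℝ} (n : ℕ) (ha : ∀ j : ℕ, 2 ≤ j → (j : ℝ) ≤ a j) :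
    |∑ j ∈ Icc 2 n, (logDefect (a j) - logDefect j)| ≤ 1 := by
  rcases Nat.eq_zero_or_pos n with rfl | hn
  · simp
  calc |∑ j ∈ Icc 2 n, (logDefect (a j) - logDefect j)|
      ≤ ∑ j ∈ Icc 2 n, |logDefect (a j) - logDefect j| := abs_sum_le_sum_abs _ _
    _ ≤ ∑ j ∈ Icc 2 n, (1 / ((j : ℝ) - 1) - 1 / j) := by
        refine sum_le_sum fun j hj => abs_logDefect_sub_le ?_ (ha j (mem_Icc.1 hj).1)
        exact_mod_cast (mem_Icc.1 hj).1
    _ = 1 - 1 / n := by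
        simpa only [neg_sub_neg, div_one] using sum_Icc_two_sub_sub_one (fun x : ℝ => -(1 / x)) hn
    _ ≤ 1 := by simp

noncomputable def xiSeq (a : ℕ → ℝ) (n : ℕ) : ℝ := 1 / a n * ∏ j ∈ Icc 2 n, (1 + 1 / (a j - 1))

section xiSeq

variable {a : ℕ → ℝ} {n : ℕ}

lemma one_add_one_div_sub_one {x : ℝ} (hx : x ≠ 1) : 1 + 1 / (x - 1) = x / (x - 1) := by
  field_simp [sub_ne_zero.2 hx]
  ring

lemma xiSeq_pos (ha : ∀ j, 2 ≤ j → 1 < a j) (hn : 0 < a n) : 0 < xiSeq a n := by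
  refine mul_pos (by positivity) (prod_pos fun j hj => ?_)
  have := ha j (mem_Icc.1 hj).1
  have : 0 < a j - 1 := by linarith
  positivity

lemma log_xiSeq (ha : ∀ j, 2 ≤ j → 1 < a j) (hn : 0 < a n) :
    log (xiSeq a n) = ∑ j ∈ Icc 2 n, (log (a j) - log (a j - 1)) - log (a n) := by
  have h1 : ∀ j ∈ Icc 2 n, 0 < a j - 1 := fun j hj => by linarith [ha j (mem_Icc.1 hj).1]
  have hfac : ∀ j ∈ Icc 2 n, 0 < a j / (a j - 1) := fun j hj =>
    div_pos (by linarith [h1 j hj]) (h1 j hj)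
  rw [xiSeq, prod_congr rfl fun j hj => one_add_one_div_sub_one (by linarith [h1 j hj]),
    log_mul (by positivity) (prod_pos hfac).ne', one_div, log_inv,
    log_prod fun j hj => (hfac j hj).ne',
    sum_congr rfl fun j hj => log_div (by linarith [h1 j hj]) (h1 j hj).ne']
  ring

lemma xiSeq_succ (hn : 1 ≤ n) (h0 : a n ≠ 0) (h1 : a (n + 1) ≠ 0) (h2 : a (n + 1) ≠ 1) :
    xiSeq a (n + 1) = xiSeq a n * (a n / (a (n + 1) - 1)) := by
  rw [xiSeq, xiSeq, prod_Icc_succ_top (by omega), one_add_one_div_sub_one h2]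
  field_simp [sub_ne_zero.2 h2]

lemma xiSeq_succ_le (ha : ∀ j, 2 ≤ j → 1 < a j) (hn : 1 ≤ n) (h0 : 0 < a n)
    (hstep : a n + 1 ≤ a (n + 1)) : xiSeq a (n + 1) ≤ xiSeq a n := by
  rw [xiSeq_succ hn h0.ne' (by linarith) (by linarith)]
  exact mul_le_of_le_one_right (xiSeq_pos ha h0).le ((div_le_one (by linarith)).2 (by linarith))

end xiSeq

lemma natCast_le_of_add_one_le_succ {a : ℕ → ℝ} (h1 : 1 ≤ a 1)
    (h : ∀ n, 1 ≤ n → a n + 1 ≤ a (n + 1)) {n : ℕ} (hn : 1 ≤ n) : (n : ℝ) ≤ a n := by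
  induction n, hn using Nat.le_induction with
  | base => simpa using h1
  | succ n hn ih => push_cast; linarith [h n hn]

lemma one_le_of_natCast_mul_step {r : ℕ → ℝ} (hr1 : r 1 = 1)
    (hrec : ∀ n : ℕ, 1 ≤ n → (n : ℝ) * r n + 1 ≤ (n + 1) * r (n + 1)) {n : ℕ} (hn : 1 ≤ n) :
    1 ≤ r n := by
  have hle : (n : ℝ) ≤ n * r n := natCast_le_of_add_one_le_succ (a := fun j => j * r j)
    (by simp [hr1]) (fun k hk => by push_cast; exact hrec k hk) hn
  exact (le_mul_iff_one_le_right (Nat.cast_pos.2 hn)).1 (by simpa using hle)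

lemma one_lt_natCast_mul {j : ℕ} {x : ℝ} (hj : 2 ≤ j) (hx : 1 ≤ x) : 1 < j * x := by
  have : (2 : ℝ) ≤ j := by exact_mod_cast hj
  nlinarith

noncomputable def growthSum (r : ℕ → ℝ) (n : ℕ) : ℝ :=
  log (r n) + ∑ j ∈ Icc 2 n, (1 / (j : ℝ)) * (1 - 1 / r j)

lemma growthSum_add_log_xiSeq {r : ℕ → ℝ} (hr : ∀ n, 1 ≤ n → 1 ≤ r n) {n : ℕ} (hn : 1 ≤ n) :
    growthSum r n + log (xiSeq (fun j => j * r j) n) =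
      ∑ j ∈ Icc 2 n, (logDefect (j * r j) - logDefect j) := by
  have hn0 : (0 : ℝ) < n := by exact_mod_cast hn
  have ha : ∀ j : ℕ, 2 ≤ j → 1 < (j : ℝ) * r j := fun j hj =>
    one_lt_natCast_mul hj (hr j (by omega))
  have hlogr : log (r n) = log (n * r n) - log n := by
    rw [log_mul hn0.ne' (by linarith [hr n hn])]
    ring
  have hlogn := sum_Icc_two_sub_sub_one log hn
  rw [log_one, sub_zero] at hlogn
  rw [growthSum, log_xiSeq ha (by nlinarith [hr n hn]), hlogr, ← hlogn]
  simp only [logDefect, mul_sub, mul_one, one_div_mul_one_div, sum_sub_distrib]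
  ring

lemma tendsto_atTop_iff_tendsto_atBot_of_abs_add_le {α G : Type*} [AddCommGroup G] [LinearOrder G]
    [IsOrderedAddMonoid G] {l : Filter α} {f g : α → G} {C : G}
    (h : ∀ᶠ x in l, |f x + g x| ≤ C) : Tendsto f l atTop ↔ Tendsto g l atBot := by
  constructor
  · intro hf
    refine (tendsto_atBot_add_left_of_ge' l C (h.mono fun x hx => (abs_le.1 hx).2)
      (tendsto_neg_atTop_atBot.comp hf)).congr fun x => ?_
    simp
  · intro hg
    refine (tendsto_atTop_add_left_of_le' l (-C) (h.mono fun x hx => (abs_le.1 hx).1)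
      (tendsto_neg_atBot_atTop.comp hg)).congr fun x => ?_
    simp

lemma tendsto_nhds_zero_iff_tendsto_log_atBot {α : Type*} {l : Filter α} {f : α → ℝ}
    (hf : ∀ᶠ x in l, 0 < f x) : Tendsto f l (nhds 0) ↔ Tendsto (fun x => log (f x)) l atBot := by
  rw [← tendsto_exp_comp_nhds_zero]
  exact tendsto_congr' (hf.mono fun x hx => (exp_log hx).symm)

theorem stmt_2 (r ξ : ℕ → ℝ)
    (hr1 : r 1 = 1)
    (hrec : ∀ n : ℕ, 1 ≤ n → ((n : ℝ) + 1) * r (n + 1) ≥ (n : ℝ) * r n + 1)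
    (hxi1 : ξ 1 = 1)
    (hxi : ∀ n : ℕ, 1 < n →
      ξ n = (1 / ((n : ℝ) * r n)) * ∏ j ∈ Finset.Icc 2 n, (1 + 1 / ((j : ℝ) * r j - 1))) :
    (∀ n : ℕ, 1 ≤ n → ξ (n + 1) ≤ ξ n) ∧
    (Tendsto ξ atTop (nhds 0) ↔
      Tendsto (fun n => Real.log (r n) + ∑ j ∈ Finset.Icc 2 n, (1 / (j : ℝ)) * (1 - 1 / r j))
        atTop atTop) := by
  have hr : ∀ n : ℕ, 1 ≤ n → 1 ≤ r n := fun n => one_le_of_natCast_mul_step hr1 hrec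
  have ha : ∀ j : ℕ, 2 ≤ j → 1 < (j : ℝ) * r j := fun j hj =>
    one_lt_natCast_mul hj (hr j (by omega))
  have hapos : ∀ n : ℕ, 1 ≤ n → 0 < (n : ℝ) * r n := fun n hn =>
    mul_pos (Nat.cast_pos.2 hn) (by linarith [hr n hn])
  have hξ : ∀ n : ℕ, 1 ≤ n → ξ n = xiSeq (fun j => j * r j) n := by
    intro n hn
    rcases hn.eq_or_lt with rfl | hn
    · simp [xiSeq, hxi1, hr1]
    · exact hxi n hn
  refine ⟨fun n hn => ?_, ?_⟩
  · rw [hξ n hn, hξ (n + 1) (by omega)]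
    exact xiSeq_succ_le ha hn (hapos n hn) (by push_cast; exact hrec n hn)
  · rw [tendsto_nhds_zero_iff_tendsto_log_atBot (eventually_atTop.2 ⟨1, fun n hn =>
      hξ n hn ▸ xiSeq_pos ha (hapos n hn)⟩)]
    refine (tendsto_atTop_iff_tendsto_atBot_of_abs_add_le (C := 1) ?_).symm
    filter_upwards [eventually_ge_atTop 1] with n hn
    change |growthSum r n + _| ≤ 1
    rw [hξ n hn, growthSum_add_log_xiSeq hr hn]
    exact abs_sum_logDefect_sub_le n fun j hj =>
      le_mul_of_one_le_right (Nat.cast_nonneg j) (hr j (by omega))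
end

section
/- Let ξ be a nonincreasing positive sequence tending to 0 with ratio of regularity r = ξ_a/ξ, and let φ be a nondecreasing strictly positive sequence with φ ≤ r pointwise. Then for every m with m·φ_m > 2 and every n ≥ m, (ξ_a)_n ≤ (m/n)^{1 − 2/φ_m} · (ξ_a)_m. -/
open Finset Filter Real

/-!
Since `φ` is nondecreasing, `ξ_{n+1} ≤ c (ξ_a)_{n+1}` with `c = 1/φ_m` for every `n ≥ m`. Inserted into
`(n+1)(ξ_a)_{n+1} = n (ξ_a)_n + ξ_{n+1}` this gives `(ξ_a)_{n+1} ≤ n/(n+1-c) · (ξ_a)_n`, and the elementary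
inequality `(1-y)^{2c} ≤ e^{-2cy} ≤ 1/(1+2cy) ≤ 1 - cy` (valid for `2cy ≤ 1`, i.e. `2c ≤ n+1`) bounds the factor
by `(n/(n+1))^{1-2c}`. The product of these factors from `m` to `n-1` telescopes to `(m/n)^{1-2c}`.
-/

lemma one_sub_rpow_two_mul_le {c y : ℝ} (hc : 0 ≤ c) (hy₀ : 0 ≤ y) (hy₁ : y ≤ 1)
    (hcy : 2 * c * y ≤ 1) : (1 - y) ^ (2 * c) ≤ 1 - c * y := by
  have hpos : 0 < 1 + 2 * c * y := by positivity
  calc (1 - y) ^ (2 * c) ≤ exp (-y) ^ (2 * c) :=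
        rpow_le_rpow (by linarith) (by linarith [add_one_le_exp (-y)]) (by linarith)
    _ = (exp (2 * c * y))⁻¹ := by rw [← exp_mul, ← exp_neg]; ring_nf
    _ ≤ (1 + 2 * c * y)⁻¹ := inv_anti₀ hpos (by linarith [add_one_le_exp (2 * c * y)])
    _ ≤ 1 - c * y := by
        rw [inv_le_iff_one_le_mul₀ hpos]
        nlinarith [mul_nonneg (mul_nonneg hc hy₀) (sub_nonneg.2 hcy)]

lemma div_add_one_sub_le_rpow {x c : ℝ} (hx : 0 < x) (hc : 0 ≤ c) (hcx : 2 * c ≤ x + 1) :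
    x / (x + 1 - c) ≤ (x / (x + 1)) ^ (1 - 2 * c) := by
  have hx₁ : 0 < x + 1 := by linarith
  have hden : 0 < x + 1 - c := by linarith
  have hb : 0 < x / (x + 1) := by positivity
  have hpow : (x / (x + 1)) ^ (2 * c) ≤ (x + 1 - c) / (x + 1) := by
    have hy : x / (x + 1) = 1 - 1 / (x + 1) := by field_simp; ring
    have key := one_sub_rpow_two_mul_le hc (y := 1 / (x + 1)) (by positivity)
      (by rw [div_le_one hx₁]; linarith) (by rw [mul_one_div, div_le_one hx₁]; exact hcx)
    calc (x / (x + 1)) ^ (2 * c) ≤ 1 - c * (1 / (x + 1)) := hy ▸ key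
      _ = (x + 1 - c) / (x + 1) := by field_simp
  rw [rpow_sub hb, rpow_one, le_div_iff₀ (rpow_pos_of_pos hb _)]
  calc x / (x + 1 - c) * (x / (x + 1)) ^ (2 * c)
      ≤ x / (x + 1 - c) * ((x + 1 - c) / (x + 1)) := by gcongr
    _ = x / (x + 1) := by field_simp

lemma succ_mul_am_succ (ξ : ℕ → ℝ) (n : ℕ) :
    ((n : ℝ) + 1) * am ξ (n + 1) = n * am ξ n + ξ (n + 1) := by
  rcases Nat.eq_zero_or_pos n with rfl | hn
  · simp [am]
  · have hn' : (n : ℝ) ≠ 0 := by positivity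
    simp only [am, sum_Icc_succ_top (Nat.le_add_left 1 n), Nat.cast_add, Nat.cast_one]
    field_simp

lemma am_pos {ξ : ℕ → ℝ} (hpos : ∀ n : ℕ, 1 ≤ n → 0 < ξ n) {n : ℕ} (hn : 1 ≤ n) : 0 < am ξ n :=
  div_pos (sum_pos (fun j hj ↦ hpos j (mem_Icc.1 hj).1) ⟨1, mem_Icc.2 ⟨le_rfl, hn⟩⟩)
    (by exact_mod_cast hn)

lemma am_succ_le_rpow_mul_am {ξ : ℕ → ℝ} {n : ℕ} {c : ℝ} (hn : 1 ≤ n) (hc : 0 ≤ c)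
    (hcn : 2 * c ≤ n + 1) (hξ : ξ (n + 1) ≤ c * am ξ (n + 1)) (ham : 0 ≤ am ξ n) :
    am ξ (n + 1) ≤ ((n : ℝ) / (n + 1)) ^ (1 - 2 * c) * am ξ n := by
  have hn₀ : (0 : ℝ) < n := by exact_mod_cast hn
  have hden : (0 : ℝ) < n + 1 - c := by linarith
  have hstep : am ξ (n + 1) * (n + 1 - c) ≤ n * am ξ n := by
    linarith [succ_mul_am_succ ξ n]
  calc am ξ (n + 1) ≤ n / (n + 1 - c) * am ξ n := by
        rw [div_mul_eq_mul_div, le_div_iff₀ hden]; exact hstep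
    _ ≤ ((n : ℝ) / (n + 1)) ^ (1 - 2 * c) * am ξ n := by
        gcongr; exact div_add_one_sub_le_rpow hn₀ hc hcn

lemma le_div_rpow_mul_of_succ_le {a : ℕ → ℝ} {p : ℝ} {m : ℕ} (hm : 1 ≤ m)
    (ha : ∀ n, m ≤ n → a (n + 1) ≤ ((n : ℝ) / (n + 1)) ^ p * a n) {n : ℕ} (hmn : m ≤ n) :
    a n ≤ ((m : ℝ) / n) ^ p * a m := by
  induction n, hmn using Nat.le_induction with
  | base => rw [div_self (by positivity), one_rpow, one_mul]
  | succ n hmn ih =>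
    have hn : (0 : ℝ) < n := by exact_mod_cast hm.trans hmn
    calc a (n + 1) ≤ ((n : ℝ) / (n + 1)) ^ p * a n := ha n hmn
      _ ≤ ((n : ℝ) / (n + 1)) ^ p * (((m : ℝ) / n) ^ p * a m) := by gcongr
      _ = ((m : ℝ) / (n + 1 : ℕ)) ^ p * a m := by
        rw [← mul_assoc, ← mul_rpow (by positivity) (by positivity)]
        congr 2
        push_cast
        field_simp

theorem stmt_4_general (ξ φ : ℕ → ℝ)
    (hpos : ∀ n : ℕ, 1 ≤ n → 0 < ξ n)
    (hφmono : ∀ n : ℕ, 1 ≤ n → φ n ≤ φ (n + 1))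
    (hφpos : ∀ n : ℕ, 1 ≤ n → 0 < φ n)
    (hφle : ∀ n : ℕ, 1 ≤ n → φ n ≤ am ξ n / ξ n) :
    ∀ m n : ℕ, 1 ≤ m → 2 < (m : ℝ) * φ m → m ≤ n →
      am ξ n ≤ ((m : ℝ) / n) ^ ((1 : ℝ) - 2 / φ m) * am ξ m := by
  intro m n hm hmφ hmn
  have hφm : 0 < φ m := hφpos m hm
  have hexp : (1 : ℝ) - 2 / φ m = 1 - 2 * (1 / φ m) := by ring
  rw [hexp]
  refine le_div_rpow_mul_of_succ_le hm (fun k hk ↦ ?_) hmn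
  have hk₁ : 1 ≤ k + 1 := Nat.le_add_left 1 k
  have hφk : φ m ≤ φ (k + 1) :=
    monotoneOn_nat_Ici_of_le_succ hφmono hm hk₁ (by omega)
  have hξ : ξ (k + 1) ≤ 1 / φ m * am ξ (k + 1) := by
    have hξpos := hpos _ hk₁
    have hr := (le_div_iff₀ hξpos).1 (hφle (k + 1) hk₁)
    rw [one_div_mul_eq_div, le_div_iff₀ hφm]
    calc ξ (k + 1) * φ m ≤ ξ (k + 1) * φ (k + 1) := by gcongr
      _ ≤ am ξ (k + 1) := by linarith
  have hcm : 2 * (1 / φ m) ≤ k + 1 := by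
    have : (m : ℝ) ≤ k := by exact_mod_cast hk
    rw [mul_one_div, div_le_iff₀ hφm]
    nlinarith
  exact am_succ_le_rpow_mul_am (hm.trans hk) (by positivity) hcm hξ (am_pos hpos (hm.trans hk)).le

theorem stmt_4 (ξ φ : ℕ → ℝ)
    (hmono : ∀ n : ℕ, 1 ≤ n → ξ (n + 1) ≤ ξ n)
    (hpos : ∀ n : ℕ, 1 ≤ n → 0 < ξ n)
    (hlim : Tendsto ξ atTop (nhds 0))
    (hφmono : ∀ n : ℕ, 1 ≤ n → φ n ≤ φ (n + 1))
    (hφpos : ∀ n : ℕ, 1 ≤ n → 0 < φ n)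
    (hφle : ∀ n : ℕ, 1 ≤ n → φ n ≤ am ξ n / ξ n) :
    ∀ m n : ℕ, 1 ≤ m → 2 < (m : ℝ) * φ m → m ≤ n →
      am ξ n ≤ ((m : ℝ) / n) ^ ((1 : ℝ) - 2 / φ m) * am ξ m :=
  stmt_4_general ξ φ hpos hφmono hφpos hφle
end

section
/- For any η ∈ c₀* (nonincreasing, tending to 0) with η_n > 0 for all n, the ratio of second-order to first-order arithmetic means satisfies r(η_a)_{n+1} ≤ (1 + 1/n)·r(η_a)_n for all n ≥ 1, where r(η_a)_n = (η_{a²})_n/(η_a)_n. -/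
open Finset Filter Real

/-! The common factor `1 / n` cancels, so the ratio `r_n` is a ratio of partial sums
`T_n / S_n` with `S_n = ∑ ξ_j` and `T_n = ∑ (ξ_a)_j`; then `T_{n+1} = T_n + S_{n+1} / (n + 1)`.
For nonincreasing `ξ` each mean dominates its last term, so `S_n ≤ T_n`, and for positive `ξ`
also `S_n ≤ S_{n+1}`; these two inequalities give the bound. -/

theorem am2_div_am (ξ : ℕ → ℝ) (n : ℕ) :
    am2 ξ n / am ξ n = (∑ j ∈ Icc 1 n, am ξ j) / ∑ j ∈ Icc 1 n, ξ j := by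
  rcases Nat.eq_zero_or_pos n with rfl | hn
  · simp [am2, am]
  · exact div_div_div_cancel_right₀ (by positivity) _ _

theorem le_am_of_antitoneOn {ξ : ℕ → ℝ} (hξ : AntitoneOn ξ (Set.Ici 1)) {n : ℕ} (hn : 1 ≤ n) :
    ξ n ≤ am ξ n := by
  rw [am, le_div_iff₀ (by exact_mod_cast hn)]
  have h := card_nsmul_le_sum (Icc 1 n) ξ (ξ n) fun j hj ↦
    hξ (mem_Icc.mp hj).1 (show 1 ≤ n from hn) (mem_Icc.mp hj).2
  simpa [mul_comm] using h

theorem sum_le_sum_am_of_antitoneOn {ξ : ℕ → ℝ} (hξ : AntitoneOn ξ (Set.Ici 1)) (n : ℕ) :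
    ∑ j ∈ Icc 1 n, ξ j ≤ ∑ j ∈ Icc 1 n, am ξ j :=
  sum_le_sum fun _ hj ↦ le_am_of_antitoneOn hξ (mem_Icc.mp hj).1

theorem add_div_succ_div_le {n S S' T : ℝ} (hn : 0 < n) (hS : 0 < S) (hSS' : S ≤ S')
    (hST : S ≤ T) : (T + S' / (n + 1)) / S' ≤ (1 + 1 / n) * (T / S) := by
  have hS' : 0 < S' := hS.trans_le hSS'
  have hT : 0 < T := hS.trans_le hST
  rw [div_le_iff₀ hS']
  field_simp
  nlinarith [mul_le_mul_of_nonneg_left hSS' (by positivity : 0 ≤ n * (n + 1) * T),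
    mul_le_mul_of_nonneg_left hST (by positivity : 0 ≤ n * S')]

theorem stmt_5_general (η : ℕ → ℝ)
    (hmono : ∀ n : ℕ, 1 ≤ n → η (n + 1) ≤ η n)
    (hpos : ∀ n : ℕ, 1 ≤ n → 0 < η n) :
    ∀ n : ℕ, 1 ≤ n →
      am2 η (n + 1) / am η (n + 1) ≤ (1 + 1 / (n : ℝ)) * (am2 η n / am η n) := by
  intro n hn
  have hS : 0 < ∑ j ∈ Icc 1 n, η j :=
    sum_pos (fun j hj ↦ hpos j (mem_Icc.mp hj).1) ⟨1, mem_Icc.mpr ⟨le_rfl, hn⟩⟩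
  have hSS' : ∑ j ∈ Icc 1 n, η j ≤ ∑ j ∈ Icc 1 (n + 1), η j := by
    rw [sum_Icc_succ_top (by omega)]
    linarith [hpos (n + 1) (by omega)]
  rw [am2_div_am, am2_div_am, sum_Icc_succ_top (by omega), am, Nat.cast_succ]
  exact add_div_succ_div_le (by exact_mod_cast hn) hS hSS'
    (sum_le_sum_am_of_antitoneOn (antitoneOn_nat_Ici_of_succ_le hmono) n)

theorem stmt_5 (η : ℕ → ℝ)
    (hmono : ∀ n : ℕ, 1 ≤ n → η (n + 1) ≤ η n)
    (hpos : ∀ n : ℕ, 1 ≤ n → 0 < η n)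
    (hlim : Tendsto η atTop (nhds 0)) :
    ∀ n : ℕ, 1 ≤ n →
      am2 η (n + 1) / am η (n + 1) ≤ (1 + 1 / (n : ℝ)) * (am2 η n / am η n) :=
  stmt_5_general η hmono hpos
end

section
/- Let 0 ≠ η ∈ c₀* with η_2 > 0. Then for all n > 1, the ratio r(η_a)_n = (η_{a²})_n/(η_a)_n is strictly less than the harmonic number H_n = ∑_{j=1}^n 1/j; more precisely, H_n − r(η_a)_n = (∑_{i=2}^n η_i H_{i−1})/(∑_{i=1}^n η_i). -/
open Finset Filter Real

/-!
Summation by parts: `∑_{k ≤ n} (1/k) ∑_{j ≤ k} ξ_j = ∑_{j ≤ n} ξ_j (H_n - H_{j-1})`, so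
`n (ξ_{a²})_n = H_n ∑_{j ≤ n} ξ_j - ∑_{j=2}^n ξ_j H_{j-1}`. Dividing by `n (ξ_a)_n = ∑_{j ≤ n} ξ_j`
gives the identity, and the defect is positive because its `j = 2` term is `η_2 H_1 = η_2 > 0`.
-/

lemma harm_nonneg (n : ℕ) : 0 ≤ harm n :=
  sum_nonneg fun _ _ => by positivity

@[simp]
lemma harm_one : harm 1 = 1 := by
  simp [harm]

lemma harm_succ (n : ℕ) : harm (n + 1) = harm n + 1 / (n + 1) := by
  rw [harm, sum_Icc_succ_top (by omega), ← harm]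
  push_cast
  rfl

lemma sum_Icc_am (ξ : ℕ → ℝ) {n : ℕ} (hn : 1 ≤ n) :
    ∑ k ∈ Icc 1 n, am ξ k =
      (∑ j ∈ Icc 1 n, ξ j) * harm n - ∑ j ∈ Icc 2 n, ξ j * harm (j - 1) := by
  induction n, hn using Nat.le_induction with
  | base => simp [am]
  | succ n hn ih =>
    have hn' : (n : ℝ) + 1 ≠ 0 := by positivity
    rw [sum_Icc_succ_top (by omega), ih, am, sum_Icc_succ_top (by omega),
      sum_Icc_succ_top (by omega : 2 ≤ n + 1), harm_succ, Nat.add_sub_cancel]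
    push_cast
    field_simp
    ring

lemma am2_eq (ξ : ℕ → ℝ) {n : ℕ} (hn : 1 ≤ n) :
    am2 ξ n = ((∑ j ∈ Icc 1 n, ξ j) * harm n - ∑ j ∈ Icc 2 n, ξ j * harm (j - 1)) / n := by
  rw [am2, am, sum_Icc_am ξ hn]

lemma harm_sub_am2_div_am (ξ : ℕ → ℝ) {n : ℕ} (hn : 1 ≤ n) (hS : ∑ j ∈ Icc 1 n, ξ j ≠ 0) :
    harm n - am2 ξ n / am ξ n =
      (∑ j ∈ Icc 2 n, ξ j * harm (j - 1)) / ∑ j ∈ Icc 1 n, ξ j := by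
  have hn' : (n : ℝ) ≠ 0 := by positivity
  rw [am2_eq ξ hn, am]
  field_simp
  ring

theorem stmt_8_general (η : ℕ → ℝ)
    (hnonneg : ∀ n : ℕ, 1 ≤ n → 0 ≤ η n)
    (h2 : 0 < η 2) :
    ∀ n : ℕ, 1 < n →
      am2 η n / am η n < harm n ∧
      harm n - am2 η n / am η n =
        (∑ i ∈ Finset.Icc 2 n, η i * harm (i - 1)) / (∑ i ∈ Finset.Icc 1 n, η i) := by
  intro n hn
  have hS : 0 < ∑ i ∈ Icc 1 n, η i :=
    sum_pos' (fun i hi => hnonneg i (mem_Icc.mp hi).1) ⟨2, mem_Icc.mpr ⟨one_le_two, hn⟩, h2⟩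
  have hT : 0 < ∑ i ∈ Icc 2 n, η i * harm (i - 1) :=
    sum_pos' (fun i hi => mul_nonneg (hnonneg i (one_le_two.trans (mem_Icc.mp hi).1))
      (harm_nonneg _))
      ⟨2, mem_Icc.mpr ⟨le_rfl, hn⟩, by simpa using h2⟩
  have hdefect := harm_sub_am2_div_am η hn.le hS.ne'
  exact ⟨by linarith [div_pos hT hS], hdefect⟩

theorem stmt_8 (η : ℕ → ℝ)
    (hmono : ∀ n : ℕ, 1 ≤ n → η (n + 1) ≤ η n)
    (hnonneg : ∀ n : ℕ, 1 ≤ n → 0 ≤ η n)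
    (hlim : Tendsto η atTop (nhds 0))
    (h1 : 0 < η 1) (h2 : 0 < η 2) :
    ∀ n : ℕ, 1 < n →
      am2 η n / am η n < harm n ∧
      harm n - am2 η n / am η n =
        (∑ i ∈ Finset.Icc 2 n, η i * harm (i - 1)) / (∑ i ∈ Finset.Icc 1 n, η i) :=
  stmt_8_general η hnonneg h2
end

section
/- For η ∈ c₀* with all η_n > 0 and for all n ≥ m: (m/n)((η_a)_m − η_n) + η_n ≤ (η_a)_n ≤ (m/n)((η_a)_m − η_m) + η_m. -/
open Finset Filter Real

/-
Writing n·(η_a)_n = m·(η_a)_m + ∑_{m<j≤n} η_j and centring the tail at a constant c gives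
(η_a)_n = (m/n)((η_a)_m − c) + c + (1/n)∑_{m<j≤n} (η_j − c).
For c = η_n every summand is ≥ 0 and for c = η_m every summand is ≤ 0, by monotonicity.
-/

theorem natCast_mul_am (ξ : ℕ → ℝ) (n : ℕ) : (n : ℝ) * am ξ n = ∑ j ∈ Icc 1 n, ξ j := by
  rcases Nat.eq_zero_or_pos n with rfl | hn
  · simp
  · exact mul_div_cancel₀ _ (by positivity)

theorem sum_Icc_one_add_sum_Ioc (ξ : ℕ → ℝ) {m n : ℕ} (hmn : m ≤ n) :
    ∑ j ∈ Icc 1 m, ξ j + ∑ j ∈ Ioc m n, ξ j = ∑ j ∈ Icc 1 n, ξ j := by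
  rw [← zero_add 1, Icc_add_one_left_eq_Ioc, Icc_add_one_left_eq_Ioc]
  exact sum_Ioc_consecutive ξ m.zero_le hmn

theorem am_eq_of_le (ξ : ℕ → ℝ) {m n : ℕ} (hmn : m ≤ n) (hn : n ≠ 0) (c : ℝ) :
    am ξ n = (m / n) * (am ξ m - c) + c + (∑ j ∈ Ioc m n, (ξ j - c)) / n := by
  have hn_real : (n : ℝ) ≠ 0 := Nat.cast_ne_zero.2 hn
  have hsum : (n : ℝ) * am ξ n = m * am ξ m + ∑ j ∈ Ioc m n, (ξ j - c) + (n - m) * c := by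
    rw [natCast_mul_am, natCast_mul_am, ← sum_Icc_one_add_sum_Ioc ξ hmn, sum_sub_distrib,
      sum_const, Nat.card_Ioc, nsmul_eq_mul, Nat.cast_sub hmn]
    ring
  field_simp
  linear_combination hsum

theorem stmt_11_general (η : ℕ → ℝ)
    (hmono : ∀ n : ℕ, 1 ≤ n → η (n + 1) ≤ η n) :
    ∀ m n : ℕ, 1 ≤ m → m ≤ n →
      ((m : ℝ) / n) * (am η m - η n) + η n ≤ am η n ∧
      am η n ≤ ((m : ℝ) / n) * (am η m - η m) + η m := by
  intro m n hm hmn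
  have hanti : AntitoneOn η (Set.Ici 1) := antitoneOn_nat_Ici_of_succ_le hmono
  have hbetween {j : ℕ} (hj : j ∈ Ioc m n) : η n ≤ η j ∧ η j ≤ η m := by
    obtain ⟨hmj, hjn⟩ := mem_Ioc.1 hj
    have hj1 : j ∈ Set.Ici 1 := Set.mem_Ici.2 (by omega)
    exact ⟨hanti hj1 (Set.mem_Ici.2 (by omega)) hjn, hanti (Set.mem_Ici.2 hm) hj1 hmj.le⟩
  have hn : n ≠ 0 := by omega
  constructor
  · rw [am_eq_of_le η hmn hn (η n)]
    refine le_add_of_nonneg_right (div_nonneg (sum_nonneg fun j hj => ?_) n.cast_nonneg)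
    exact sub_nonneg.2 (hbetween hj).1
  · rw [am_eq_of_le η hmn hn (η m)]
    refine add_le_of_nonpos_right
      (div_nonpos_of_nonpos_of_nonneg (sum_nonpos fun j hj => ?_) n.cast_nonneg)
    exact sub_nonpos.2 (hbetween hj).2

theorem stmt_11 (η : ℕ → ℝ)
    (hmono : ∀ n : ℕ, 1 ≤ n → η (n + 1) ≤ η n)
    (hpos : ∀ n : ℕ, 1 ≤ n → 0 < η n)
    (hlim : Tendsto η atTop (nhds 0)) :
    ∀ m n : ℕ, 1 ≤ m → m ≤ n →
      ((m : ℝ) / n) * (am η m - η n) + η n ≤ am η n ∧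
      am η n ≤ ((m : ℝ) / n) * (am η m - η m) + η m :=
  stmt_11_general η hmono
end

section
/- If a nonzero sequence η ∈ c₀* satisfies the exponential Δ₂-condition sup_m ∑_{i=1}^{m²} η_i / ∑_{i=1}^m η_i < ∞, then its arithmetic mean η_a also satisfies the exponential Δ₂-condition: sup_m ∑_{i=1}^{m²} (η_a)_i / ∑_{i=1}^m (η_a)_i < ∞. -/
open Finset Filter Real

/-!
Write `S n = ∑_{i ≤ n} η_i`, so that `(η_a)_i = S i / i`. Splitting `∑_{i ≤ m²} (η_a)_i` at `m`, the
tail `∑_{m < i ≤ m²} S i / i` is at most `S (m²) · log m ≤ c · S m · log m`. On the other hand the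
condition applied at `⌊√m⌋ + 1` gives `S m ≤ c · S (⌊√m⌋ + 1)`, and
`∑_{⌊√m⌋ < i ≤ m} S i / i ≥ S (⌊√m⌋ + 1) · log ((m + 1) / (⌊√m⌋ + 1)) ≥ S (⌊√m⌋ + 1) · (log m) / 4`,
so the tail is at most `4 c²` times `∑_{i ≤ m} (η_a)_i`.
-/

noncomputable def partialSum (ξ : ℕ → ℝ) (n : ℕ) : ℝ := ∑ j ∈ Icc 1 n, ξ j

section Harmonic

lemma sum_Ioc_inv_le_log_sub_log {a b : ℕ} (ha : 1 ≤ a) (hab : a ≤ b) :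
    ∑ i ∈ Ioc a b, (i : ℝ)⁻¹ ≤ log b - log a := by
  induction b, hab using Nat.le_induction with
  | base => simp
  | succ b hab ih =>
    have hb : (0 : ℝ) < b := by exact_mod_cast ha.trans hab
    have step : ((b + 1 : ℕ) : ℝ)⁻¹ ≤ log (b + 1 : ℕ) - log b := by
      have := one_sub_inv_le_log_of_pos (x := (b + 1) / b) (by positivity)
      rw [log_div (by positivity) hb.ne', inv_div] at this
      push_cast
      convert this using 1
      field_simp
      ring
    rw [sum_Ioc_succ_top (by omega)]
    linarith

lemma log_succ_sub_log_succ_le_sum_Ioc_inv {a b : ℕ} (hab : a ≤ b) :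
    log (b + 1) - log (a + 1) ≤ ∑ i ∈ Ioc a b, (i : ℝ)⁻¹ := by
  induction b, hab using Nat.le_induction with
  | base => simp
  | succ b hab ih =>
    have step : log ((b + 1 : ℕ) + 1) - log ((b + 1 : ℕ) : ℝ) ≤ ((b + 1 : ℕ) : ℝ)⁻¹ := by
      have := log_le_sub_one_of_pos (x := ((b + 1 : ℕ) + 1) / (b + 1 : ℕ)) (by positivity)
      rw [log_div (by positivity) (by positivity)] at this
      convert this using 1
      field_simp
      ring
    rw [sum_Ioc_succ_top (by omega)]
    push_cast at step ⊢
    linarith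

lemma mul_sqrt_add_one_pow_four_le (m : ℕ) : m * (Nat.sqrt m + 1) ^ 4 ≤ (m + 1) ^ 4 := by
  have hs : Nat.sqrt m * Nat.sqrt m ≤ m := Nat.sqrt_le m
  have h2 : (Nat.sqrt m + 1) ^ 2 ≤ 2 * (m + 1) := by nlinarith [sq_nonneg (Nat.sqrt m - 1 : ℤ)]
  calc m * (Nat.sqrt m + 1) ^ 4 = m * ((Nat.sqrt m + 1) ^ 2) ^ 2 := by ring
    _ ≤ m * (2 * (m + 1)) ^ 2 := by gcongr
    _ ≤ (m + 1) ^ 4 := by nlinarith [sq_nonneg (m - 1 : ℤ)]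

lemma log_le_four_mul_sum_Ioc_sqrt_inv (m : ℕ) :
    log m ≤ 4 * ∑ i ∈ Ioc (Nat.sqrt m) m, (i : ℝ)⁻¹ := by
  rcases Nat.eq_zero_or_pos m with rfl | hm
  · simp
  have hlog : log m + 4 * log (Nat.sqrt m + 1) ≤ 4 * log (m + 1) := by
    have := log_le_log (by positivity)
      (by exact_mod_cast mul_sqrt_add_one_pow_four_le m : (m * (Nat.sqrt m + 1) ^ 4 : ℝ) ≤ (m + 1) ^ 4)
    rwa [log_mul (by positivity) (by positivity), log_pow, log_pow] at this
  have := log_succ_sub_log_succ_le_sum_Ioc_inv (Nat.sqrt_le_self m)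
  linarith

end Harmonic

section PartialSums

variable {ξ : ℕ → ℝ}

lemma am_eq_partialSum_div (n : ℕ) : am ξ n = partialSum ξ n / n := rfl

variable (hξ : ∀ n, 1 ≤ n → 0 ≤ ξ n)
include hξ

lemma partialSum_mono : Monotone (partialSum ξ) := fun _ _ hab =>
  sum_le_sum_of_subset_of_nonneg (Icc_subset_Icc_right hab)
    fun i hi _ => hξ i (mem_Icc.mp hi).1

lemma partialSum_nonneg (n : ℕ) : 0 ≤ partialSum ξ n :=
  sum_nonneg fun i hi => hξ i (mem_Icc.mp hi).1

lemma am_nonneg (n : ℕ) : 0 ≤ am ξ n :=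
  div_nonneg (partialSum_nonneg hξ n) n.cast_nonneg

lemma sum_Ioc_am_le (a b : ℕ) :
    ∑ i ∈ Ioc a b, am ξ i ≤ partialSum ξ b * ∑ i ∈ Ioc a b, (i : ℝ)⁻¹ := by
  rw [mul_sum]
  refine sum_le_sum fun i hi => ?_
  rw [am_eq_partialSum_div, div_eq_mul_inv]
  gcongr
  exact partialSum_mono hξ (mem_Ioc.mp hi).2

lemma partialSum_mul_le_sum_Ioc_am (a b : ℕ) :
    partialSum ξ (a + 1) * ∑ i ∈ Ioc a b, (i : ℝ)⁻¹ ≤ ∑ i ∈ Ioc a b, am ξ i := by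
  rw [mul_sum]
  refine sum_le_sum fun i hi => ?_
  rw [am_eq_partialSum_div, div_eq_mul_inv]
  gcongr
  exact partialSum_mono hξ (mem_Ioc.mp hi).1

lemma sum_Ioc_sq_am_le {c : ℝ} (hc : 0 ≤ c)
    (hΔ : ∀ m, 1 ≤ m → partialSum ξ (m ^ 2) ≤ c * partialSum ξ m) {m : ℕ} (hm : 1 ≤ m) :
    ∑ i ∈ Ioc m (m ^ 2), am ξ i ≤ 4 * c ^ 2 * ∑ i ∈ Icc 1 m, am ξ i := by
  set s := Nat.sqrt m
  have hS := partialSum_nonneg hξ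
  have hmm : m ≤ m ^ 2 := Nat.le_self_pow two_ne_zero m
  have hupper : ∑ i ∈ Ioc m (m ^ 2), am ξ i ≤ c * partialSum ξ m * log m := by
    have hlog := sum_Ioc_inv_le_log_sub_log hm hmm
    rw [Nat.cast_pow, log_pow, Nat.cast_ofNat] at hlog
    calc ∑ i ∈ Ioc m (m ^ 2), am ξ i ≤ partialSum ξ (m ^ 2) * ∑ i ∈ Ioc m (m ^ 2), (i : ℝ)⁻¹ :=
          sum_Ioc_am_le hξ _ _
      _ ≤ c * partialSum ξ m * log m := by
          gcongr
          · exact mul_nonneg hc (hS m)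
          · exact hΔ m hm
          · linarith
  have hsqrt : partialSum ξ m ≤ c * partialSum ξ (s + 1) :=
    (partialSum_mono hξ (Nat.lt_succ_sqrt' m).le).trans (hΔ (s + 1) (by omega))
  have hlower : partialSum ξ (s + 1) * log m ≤ 4 * ∑ i ∈ Icc 1 m, am ξ i := by
    have hsub : ∑ i ∈ Ioc s m, am ξ i ≤ ∑ i ∈ Icc 1 m, am ξ i :=
      sum_le_sum_of_subset_of_nonneg (fun i hi => by simp only [mem_Ioc, mem_Icc] at hi ⊢; omega)
        fun i _ _ => am_nonneg hξ i
    calc partialSum ξ (s + 1) * log m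
        ≤ partialSum ξ (s + 1) * (4 * ∑ i ∈ Ioc s m, (i : ℝ)⁻¹) :=
          mul_le_mul_of_nonneg_left (log_le_four_mul_sum_Ioc_sqrt_inv m) (hS _)
      _ ≤ 4 * ∑ i ∈ Icc 1 m, am ξ i := by
          have := partialSum_mul_le_sum_Ioc_am hξ s m
          linarith
  have hlogm : 0 ≤ log m := log_natCast_nonneg m
  calc ∑ i ∈ Ioc m (m ^ 2), am ξ i ≤ c * partialSum ξ m * log m := hupper
    _ ≤ c * (c * partialSum ξ (s + 1)) * log m := by gcongr
    _ = c ^ 2 * (partialSum ξ (s + 1) * log m) := by ring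
    _ ≤ c ^ 2 * (4 * ∑ i ∈ Icc 1 m, am ξ i) := by gcongr
    _ = 4 * c ^ 2 * ∑ i ∈ Icc 1 m, am ξ i := by ring

end PartialSums

theorem stmt_16_general (η : ℕ → ℝ)
    (hnonneg : ∀ n : ℕ, 1 ≤ n → 0 ≤ η n)
    (hΔ : ∃ c : ℝ, 0 < c ∧ ∀ m : ℕ, 1 ≤ m →
        ∑ i ∈ Finset.Icc 1 (m ^ 2), η i ≤ c * ∑ i ∈ Finset.Icc 1 m, η i) :
    ∃ c' : ℝ, 0 < c' ∧ ∀ m : ℕ, 1 ≤ m →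
        ∑ i ∈ Finset.Icc 1 (m ^ 2), am η i ≤ c' * ∑ i ∈ Finset.Icc 1 m, am η i := by
  obtain ⟨c, hc, hΔ⟩ := hΔ
  refine ⟨1 + 4 * c ^ 2, by positivity, fun m hm => ?_⟩
  have hsplit : ∑ i ∈ Icc 1 (m ^ 2), am η i = ∑ i ∈ Icc 1 m, am η i + ∑ i ∈ Ioc m (m ^ 2), am η i :=
    (sum_Ioc_consecutive _ (Nat.zero_le m) (Nat.le_self_pow two_ne_zero m)).symm
  have htail := sum_Ioc_sq_am_le hnonneg hc.le hΔ hm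
  rw [hsplit]
  linarith

theorem stmt_16 (η : ℕ → ℝ)
    (hmono : ∀ n : ℕ, 1 ≤ n → η (n + 1) ≤ η n)
    (hnonneg : ∀ n : ℕ, 1 ≤ n → 0 ≤ η n)
    (h1 : 0 < η 1)
    (hlim : Tendsto η atTop (nhds 0))
    (hΔ : ∃ c : ℝ, 0 < c ∧ ∀ m : ℕ, 1 ≤ m →
        ∑ i ∈ Finset.Icc 1 (m ^ 2), η i ≤ c * ∑ i ∈ Finset.Icc 1 m, η i) :
    ∃ c' : ℝ, 0 < c' ∧ ∀ m : ℕ, 1 ≤ m →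
        ∑ i ∈ Finset.Icc 1 (m ^ 2), am η i ≤ c' * ∑ i ∈ Finset.Icc 1 m, am η i :=
  stmt_16_general η hnonneg hΔ
end
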